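/- For every real Δ > 0 and every odd positive integer n, the terminating hypergeometric sum Σ_{m=0}^{n} [(−n)_m ((4Δ/3) + n − 1)_m (Δ/3)_m] / [((2Δ/3)_m)² m!] equals 0. Equivalently, the continuous Hahn polynomial with parameters a = b = 2Δ/3, c = d = 0 vanishes at x = −Δ/3 whenever its degree is odd. -/

import Mathlib

/-- Pochhammer symbol `(x)_m = x(x+1)⋯(x+m−1)`, with `(x)_0 = 1`. -/
noncomputable def poch (x : ℝ) : ℕ → ℝ
  | 0 => 1
  | m + 1 => poch x m * (x + m)

/-- Continuous Hahn polynomial `P̃_n(a,b,c,d;x)` in its terminating ₃F₂ form. -/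
noncomputable def continuousHahn (a b c d x : ℝ) (n : ℕ) : ℝ :=
  ∑ m ∈ Finset.range (n + 1),
    (poch (-(n : ℝ)) m * poch ((n : ℝ) + a + b + c + d - 1) m * poch (a + x) m)
    / (poch (a + c) m * poch (a + d) m * (m.factorial : ℝ))

/-!
The sum is Watson's `₃F₂(-n, n + 4a - 1, a; 2a, 2a; 1)` with `a = Δ/3`. Sheppard's
transformation (Chu–Vandermonde inside, Gauss summation for the inner sum) turns it into
`(a)_n / (2a)_n · ₃F₂(-n, 1 - 2a - n, a; 2a, 1 - a - n; 1)`, whose parameters pair up as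
`b + d = c + e = 1 - n`. For such a series the reflection `k ↦ n - k` multiplies the `k`-th term
by `(-1)^n`, so it vanishes for odd `n`.
-/

open Finset Polynomial

lemma poch_eq_eval (x : ℝ) (m : ℕ) : poch x m = (ascPochhammer ℝ m).eval x := by
  induction m with
  | zero => simp [poch]
  | succ m ih => rw [poch, ih, ascPochhammer_succ_eval]

lemma poch_pos {x : ℝ} (hx : 0 < x) (m : ℕ) : 0 < poch x m := by
  rw [poch_eq_eval]
  exact ascPochhammer_pos m x hx

lemma poch_add (x : ℝ) (m k : ℕ) : poch x (m + k) = poch x m * poch (x + m) k := by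
  simp only [poch_eq_eval, ← ascPochhammer_mul ℝ m k, eval_mul, eval_comp, eval_add, eval_X,
    eval_natCast]

lemma poch_ne_zero_of_le {x : ℝ} {m n : ℕ} (hx : poch x n ≠ 0) (hmn : m ≤ n) :
    poch x m ≠ 0 := by
  obtain ⟨k, rfl⟩ := Nat.exists_eq_add_of_le hmn
  exact left_ne_zero_of_mul (poch_add x m k ▸ hx)

lemma poch_one_sub_sub (y : ℝ) (k : ℕ) : poch (1 - y - k) k = (-1) ^ k * poch y k := by
  rw [poch_eq_eval, show 1 - y - k = -(y + k - 1) by ring,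
    ascPochhammer_eval_neg_eq_descPochhammer, descPochhammer_eval_eq_ascPochhammer, poch_eq_eval]
  ring_nf

lemma poch_sub_mul_poch_one_sub_sub (x : ℝ) {k n : ℕ} (hk : k ≤ n) :
    poch x (n - k) * poch (1 - x - n) k = (-1) ^ k * poch x n := by
  have h := poch_one_sub_sub (x + (n - k : ℕ)) k
  rw [Nat.cast_sub hk, show 1 - (x + (n - k)) - k = 1 - x - n by ring, ← Nat.cast_sub hk] at h
  rw [h, mul_left_comm, ← poch_add, Nat.sub_add_cancel hk]

lemma poch_neg_natCast (N j : ℕ) : poch (-N) j = (-1) ^ j * (N.choose j * j.factorial) := by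
  rw [poch_eq_eval, ascPochhammer_eval_neg_eq_descPochhammer,
    descPochhammer_eval_eq_descFactorial, Nat.descFactorial_eq_factorial_mul_choose]
  push_cast
  ring

lemma poch_eq_smeval_descPochhammer (x : ℝ) (m : ℕ) :
    poch x m = (descPochhammer ℤ m).smeval (x + m - 1) := by
  rw [poch_eq_eval, ← ascPochhammer_smeval_eq_eval, descPochhammer_smeval_eq_ascPochhammer]
  ring_nf

/-- Chu–Vandermonde, obtained from the falling-factorial form by splitting
`c - b + N - 1 = -b + (c + N - 1)`. -/
lemma poch_sub_eq_sum (b c : ℝ) (N : ℕ) :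
    poch (c - b) N
      = ∑ i ∈ range (N + 1), (-1) ^ i * N.choose i * poch b i * poch (c + i) (N - i) := by
  rw [poch_eq_smeval_descPochhammer, show c - b + N - 1 = -b + (c + N - 1) by ring,
    Ring.descPochhammer_smeval_add _ (Commute.all _ _), Nat.sum_antidiagonal_eq_sum_range_succ_mk]
  refine sum_congr rfl fun i hi => ?_
  have hiN : i ≤ N := Nat.lt_succ_iff.mp (mem_range.mp hi)
  have hb : (descPochhammer ℤ i).smeval (-b) = (-1) ^ i * poch b i := by
    rw [← poch_one_sub_sub, poch_eq_smeval_descPochhammer]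
    ring_nf
  have hc : (descPochhammer ℤ (N - i)).smeval (c + N - 1) = poch (c + i) (N - i) := by
    rw [poch_eq_smeval_descPochhammer, Nat.cast_sub hiN]
    ring_nf
  rw [hb, hc]
  ring

lemma sum_range_sum_range_succ_comm {M : Type*} [AddCommMonoid M] (n : ℕ)
    (f : ℕ → ℕ → M) :
    ∑ m ∈ range (n + 1), ∑ k ∈ range (m + 1), f m k
      = ∑ k ∈ range (n + 1), ∑ j ∈ range (n - k + 1), f (k + j) k := by
  have h := sum_Ico_Ico_comm 0 (n + 1) fun k m => f m k
  simp only [Nat.Ico_zero_eq_range, sum_Ico_eq_sum_range] at h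
  rw [← h]
  refine sum_congr rfl fun k hk => ?_
  rw [show n + 1 - k = n - k + 1 by have := mem_range.mp hk; omega]

noncomputable def terminating2F1 (N : ℕ) (b c : ℝ) : ℝ :=
  ∑ j ∈ range (N + 1), poch (-N) j * poch b j / (poch c j * j.factorial)

noncomputable def terminating3F2 (n : ℕ) (b c d e : ℝ) : ℝ :=
  ∑ k ∈ range (n + 1), poch (-n) k * poch b k * poch c k / (poch d k * poch e k * k.factorial)

lemma continuousHahn_eq_terminating3F2 (a b c d x : ℝ) (n : ℕ) :
    continuousHahn a b c d x n
      = terminating3F2 n (n + a + b + c + d - 1) (a + x) (a + c) (a + d) :=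
  rfl

lemma terminating2F1_eq {N : ℕ} (b : ℝ) {c : ℝ} (hc : poch c N ≠ 0) :
    terminating2F1 N b c = poch (c - b) N / poch c N := by
  rw [eq_div_iff hc, terminating2F1, sum_mul, poch_sub_eq_sum]
  refine sum_congr rfl fun j hj => ?_
  have hjN : j ≤ N := Nat.lt_succ_iff.mp (mem_range.mp hj)
  have hcj : poch c j ≠ 0 := poch_ne_zero_of_le hc hjN
  rw [← Nat.add_sub_cancel' hjN, poch_add, poch_neg_natCast, Nat.add_sub_cancel_left]
  field_simp

/-- Expanding `(b)_m = (d - (d - b))_m` by Chu–Vandermonde and summing over `m` first. -/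
lemma terminating3F2_eq_sum_mul_terminating2F1 (n : ℕ) (b c : ℝ) {d e : ℝ}
    (hd : poch d n ≠ 0) (he : poch e n ≠ 0) :
    terminating3F2 n b c d e
      = ∑ k ∈ range (n + 1), (-1) ^ k * poch (-n) k * poch c k * poch (d - b) k
          / (poch d k * poch e k * k.factorial) * terminating2F1 (n - k) (c + k) (e + k) := by
  set F : ℕ → ℕ → ℝ := fun m k =>
    poch (-n) m * poch c m / (poch d m * poch e m * m.factorial) *
      ((-1) ^ k * m.choose k * poch (d - b) k * poch (d + k) (m - k))
  have hexpand : ∀ m ∈ range (n + 1),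
      poch (-n) m * poch b m * poch c m / (poch d m * poch e m * m.factorial)
        = ∑ k ∈ range (m + 1), F m k := by
    intro m _
    have hv := poch_sub_eq_sum (d - b) d m
    rw [sub_sub_cancel] at hv
    simp only [F]
    rw [← mul_sum, ← hv]
    ring
  rw [terminating3F2, sum_congr rfl hexpand, sum_range_sum_range_succ_comm]
  refine sum_congr rfl fun k hk => ?_
  have hkn : k ≤ n := Nat.lt_succ_iff.mp (mem_range.mp hk)
  rw [terminating2F1, mul_sum]
  refine sum_congr rfl fun j hj => ?_
  have hkj : k + j ≤ n := by have := mem_range.mp hj; omega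
  obtain ⟨hdk, hdkj⟩ := mul_ne_zero_iff.mp (poch_add d k j ▸ poch_ne_zero_of_le hd hkj)
  obtain ⟨hek, hekj⟩ := mul_ne_zero_iff.mp (poch_add e k j ▸ poch_ne_zero_of_le he hkj)
  have hfac : ((k + j).choose k : ℝ) * k.factorial * j.factorial = (k + j).factorial := by
    rw [Nat.choose_symm_add]
    exact_mod_cast Nat.add_choose_mul_factorial_mul_factorial k j
  have hch : ((k + j).choose k : ℝ) ≠ 0 :=
    mod_cast (Nat.choose_pos (Nat.le_add_right k j)).ne'
  simp only [F]
  rw [poch_add, poch_add c, poch_add d, poch_add e, Nat.add_sub_cancel_left, ← hfac,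
    show -(n : ℝ) + k = -(n - k : ℕ) by rw [Nat.cast_sub hkn]; ring]
  field_simp

lemma terminating3F2_sheppard (n : ℕ) (b c : ℝ) {d e : ℝ} (hd : poch d n ≠ 0)
    (he : poch e n ≠ 0) (hf : poch (1 + c - e - n) n ≠ 0) :
    terminating3F2 n b c d e
      = poch (e - c) n / poch e n * terminating3F2 n (d - b) c d (1 + c - e - n) := by
  rw [terminating3F2_eq_sum_mul_terminating2F1 n b c hd he, terminating3F2, mul_sum]
  refine sum_congr rfl fun k hk => ?_
  have hkn : k ≤ n := Nat.lt_succ_iff.mp (mem_range.mp hk)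
  have hsplit : poch e k * poch (e + k) (n - k) = poch e n := by
    rw [← poch_add, Nat.add_sub_cancel' hkn]
  obtain ⟨hek, hekn⟩ := mul_ne_zero_iff.mp (hsplit ▸ he)
  have hfk := poch_ne_zero_of_le hf hkn
  have hrev : poch (e - c) (n - k) = (-1) ^ k * poch (e - c) n / poch (1 + c - e - n) k := by
    rw [eq_div_iff hfk, show 1 + c - e - n = 1 - (e - c) - n by ring,
      poch_sub_mul_poch_one_sub_sub _ hkn]
  rw [terminating2F1_eq (c + k) hekn, add_sub_add_right_eq_sub, hrev, ← hsplit]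
  field_simp
  rw [← pow_mul, pow_mul', neg_one_sq, one_pow, one_mul]

lemma terminating3F2_term_eq {n : ℕ} {b c : ℝ} (hb : poch b n ≠ 0) (hc : poch c n ≠ 0)
    {k : ℕ} (hk : k ≤ n) :
    poch (-n) k * poch b k * poch c k / (poch (1 - b - n) k * poch (1 - c - n) k * k.factorial)
      = (-1) ^ k * n.choose k * (poch b k * poch b (n - k)) * (poch c k * poch c (n - k))
          / (poch b n * poch c n) := by
  have hbk : poch b (n - k) ≠ 0 := poch_ne_zero_of_le hb (n.sub_le k)
  have hck : poch c (n - k) ≠ 0 := poch_ne_zero_of_le hc (n.sub_le k)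
  have hb' : poch (1 - b - n) k = (-1) ^ k * poch b n / poch b (n - k) := by
    rw [eq_div_iff hbk, mul_comm, poch_sub_mul_poch_one_sub_sub b hk]
  have hc' : poch (1 - c - n) k = (-1) ^ k * poch c n / poch c (n - k) := by
    rw [eq_div_iff hck, mul_comm, poch_sub_mul_poch_one_sub_sub c hk]
  rw [hb', hc', poch_neg_natCast]
  field_simp
  rw [← pow_mul, pow_mul', neg_one_sq, one_pow, one_mul]

lemma terminating3F2_eq_zero_of_odd {n : ℕ} (hn : Odd n) {b c : ℝ} (hb : poch b n ≠ 0)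
    (hc : poch c n ≠ 0) : terminating3F2 n b c (1 - b - n) (1 - c - n) = 0 := by
  set t : ℕ → ℝ := fun k =>
    poch (-n) k * poch b k * poch c k / (poch (1 - b - n) k * poch (1 - c - n) k * k.factorial)
  have hsymm : ∀ k ∈ range (n + 1), t (n - k) = -t k := by
    intro k hk
    have hkn : k ≤ n := Nat.lt_succ_iff.mp (mem_range.mp hk)
    simp only [t, terminating3F2_term_eq hb hc hkn, terminating3F2_term_eq hb hc (n.sub_le k),
      Nat.sub_sub_self hkn, Nat.choose_symm hkn]
    have hsign : (-1 : ℝ) ^ (n - k) = -(-1) ^ k := by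
      have hn' := pow_add (-1 : ℝ) (n - k) k
      rw [Nat.sub_add_cancel hkn, hn.neg_one_pow] at hn'
      have hsq : (-1 : ℝ) ^ k * (-1) ^ k = 1 := by rw [← mul_pow]; norm_num
      linear_combination (-(-1 : ℝ) ^ (n - k)) * hsq - (-1 : ℝ) ^ k * hn'
    rw [hsign]
    ring
  have hrefl := sum_range_reflect t (n + 1)
  simp only [Nat.add_sub_cancel] at hrefl
  have : ∑ k ∈ range (n + 1), t k = -∑ k ∈ range (n + 1), t k := by
    conv_lhs => rw [← hrefl]
    rw [sum_congr rfl hsymm, sum_neg_distrib]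
  exact CharZero.eq_neg_self_iff.mp this

lemma terminating3F2_watson_of_odd {a : ℝ} (ha : 0 < a) {n : ℕ} (hn : Odd n) :
    terminating3F2 n (n + 4 * a - 1) a (2 * a) (2 * a) = 0 := by
  have h2a : poch (2 * a) n ≠ 0 := (poch_pos (by positivity) n).ne'
  have hsign : (-1 : ℝ) ^ n ≠ 0 := pow_ne_zero _ (by norm_num)
  have hf : poch (1 + a - 2 * a - n) n ≠ 0 := by
    rw [show 1 + a - 2 * a - n = 1 - a - n by ring, poch_one_sub_sub]
    exact mul_ne_zero hsign (poch_pos ha n).ne'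
  have hb : poch (1 - 2 * a - n) n ≠ 0 := by
    rw [poch_one_sub_sub]
    exact mul_ne_zero hsign h2a
  have h := terminating3F2_eq_zero_of_odd hn hb (poch_pos ha n).ne'
  rw [terminating3F2_sheppard n _ a h2a h2a hf]
  convert mul_zero _ using 2
  convert h using 2 <;> ring

theorem stmt_8_general (Δ : ℝ) (hΔ : 0 < Δ) (n : ℕ) (hodd : Odd n) :
    (∑ m ∈ Finset.range (n + 1),
      (poch (-(n : ℝ)) m * poch (4*Δ/3 + (n : ℝ) - 1) m * poch (Δ/3) m)
      / ((poch (2*Δ/3) m)^2 * (m.factorial : ℝ))) = 0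
    ∧ continuousHahn (2*Δ/3) (2*Δ/3) 0 0 (-(Δ/3)) n = 0 := by
  have h := terminating3F2_watson_of_odd (a := Δ / 3) (by positivity) hodd
  constructor
  · convert h using 1
    refine sum_congr rfl fun m _ => ?_
    ring_nf
  · rw [continuousHahn_eq_terminating3F2]
    convert h using 2 <;> ring

/-- The odd-degree continuous Hahn polynomials with parameters `a = b = 2Δ/3`,
`c = d = 0` vanish at `x = −Δ/3`. -/
theorem stmt_8 (Δ : ℝ) (hΔ : 0 < Δ) (n : ℕ) (hodd : Odd n) (hpos : 0 < n) :
    (∑ m ∈ Finset.range (n + 1),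
      (poch (-(n : ℝ)) m * poch (4*Δ/3 + (n : ℝ) - 1) m * poch (Δ/3) m)
      / ((poch (2*Δ/3) m)^2 * (m.factorial : ℝ))) = 0
    ∧ continuousHahn (2*Δ/3) (2*Δ/3) 0 0 (-(Δ/3)) n = 0 :=
  stmt_8_general Δ hΔ n hodd
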